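/- arXiv:0911.5642 — 6 statements merged into one kernel-verified Lean document; each statement's English description precedes it below -/
import Mathlib

section
/- Let b : ℝ → Set P be a behavior that is piecewise constant with transition points forming a set τ ⊆ ℝ such that any two distinct transition points are at least δ apart (δ > 0), and suppose a propositional formula π over P holds at time t under b. Then there exist reals c_p ≤ t ≤ c_n with c_n - c_p ≥ δ such that π holds at every t' ∈ (c_p, c_n). Moreover, if c_n - c_p = δ exactly, then π also holds at c_p and at c_n. -/
variable {P : Type*} {α : Type*}

/-- Propositional formulas: Boolean combinations (∧, ∨) of literals over alphabet `P`. -/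
inductive PropForm (P : Type*) where
  | pos : P → PropForm P
  | neg : P → PropForm P
  | conj : PropForm P → PropForm P → PropForm P
  | disj : PropForm P → PropForm P → PropForm P

/-- Truth of a propositional formula at a state (set of propositions). -/
def PropForm.eval : PropForm P → Set P → Prop
  | .pos p, s => p ∈ s
  | .neg p, s => p ∉ s
  | .conj a b, s => a.eval s ∧ b.eval s
  | .disj a b, s => a.eval s ∨ b.eval s

/-- `I` is a nonempty interval on which `b` is constant. -/
def IsConstancyInterval (b : ℝ → α) (I : Set ℝ) : Prop :=
  I.Nonempty ∧ I.OrdConnected ∧ ∀ s ∈ I, ∀ t ∈ I, b s = b t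

/-- `I` is a maximal constancy interval of `b`. -/
def IsMaximalConstancyInterval (b : ℝ → α) (I : Set ℝ) : Prop :=
  IsConstancyInterval b I ∧ ∀ J, IsConstancyInterval b J → I ⊆ J → J = I

/-- `b` is non-Berkeley for `δ`: it is piecewise constant (every instant lies in a maximal
constancy interval) and every maximal constancy interval contains a closed interval of
length `δ`. -/
def NonBerkeley (δ : ℝ) (b : ℝ → α) : Prop :=
  (∀ t : ℝ, ∃ I, IsMaximalConstancyInterval b I ∧ t ∈ I) ∧
  ∀ I, IsMaximalConstancyInterval b I → ∃ t, Set.Icc t (t + δ) ⊆ I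

/-- `x` is a transition (discontinuity) point of `b`: `b` is not locally constant at `x`. -/
def TransitionPoint (b : ℝ → α) (x : ℝ) : Prop :=
  ¬ ∃ ε > 0, ∀ y : ℝ, |y - x| < ε → b y = b x

/-
The instant `t` lies in a maximal constancy interval `I` of `b`, and by the non-Berkeley
condition `I` also contains a closed interval `[s, s + δ]`. Since `I` is an interval, it contains
the closed hull `[min t s, max t (s + δ)]`, which has length at least `δ`; `b` is constant, equal
to `b t`, on it, so `π` holds on the whole closed interval, in particular on its interior and at
both endpoints.
-/

theorem Set.OrdConnected.Icc_min_max_subset {β : Type*} [LinearOrder β] {I : Set β}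
    (hI : I.OrdConnected) {t a b : β}
    (ht : t ∈ I) (hab : a ≤ b) (hsub : Set.Icc a b ⊆ I) :
    Set.Icc (min t a) (max t b) ⊆ I := by
  have ha : a ∈ I := hsub ⟨le_rfl, hab⟩
  have hb : b ∈ I := hsub ⟨hab, le_rfl⟩
  apply hI.out
  · rcases min_choice t a with h | h <;> rw [h] <;> assumption
  · rcases max_choice t b with h | h <;> rw [h] <;> assumption

theorem NonBerkeley.exists_Icc_eq {δ : ℝ} {b : ℝ → α} (hnb : NonBerkeley δ b) (hδ : 0 ≤ δ)
    (t : ℝ) :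
    ∃ cp cn : ℝ, cp ≤ t ∧ t ≤ cn ∧ δ ≤ cn - cp ∧ ∀ u ∈ Set.Icc cp cn, b u = b t := by
  obtain ⟨I, hImax, htI⟩ := hnb.1 t
  obtain ⟨s, hs⟩ := hnb.2 I hImax
  obtain ⟨-, hIconn, hIconst⟩ := hImax.1
  have hsub := hIconn.Icc_min_max_subset htI (by linarith) hs
  refine ⟨min t s, max t (s + δ), min_le_left _ _, le_max_left _ _, ?_,
    fun u hu => hIconst u (hsub hu) t htI⟩
  have := min_le_right t s
  have := le_max_right t (s + δ)
  linarith

theorem changepoints_general (b : ℝ → Set P) (δ : ℝ) (hδ : 0 < δ)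
    (hnb : NonBerkeley δ b)
    (π : PropForm P) (t : ℝ) (ht : π.eval (b t)) :
    ∃ cp cn : ℝ, cp ≤ t ∧ t ≤ cn ∧ δ ≤ cn - cp ∧
      (∀ t' ∈ Set.Ioo cp cn, π.eval (b t')) ∧
      (cn - cp = δ → π.eval (b cp) ∧ π.eval (b cn)) := by
  obtain ⟨cp, cn, hcpt, htcn, hlen, hconst⟩ := hnb.exists_Icc_eq hδ.le t
  have hπ : ∀ u ∈ Set.Icc cp cn, π.eval (b u) := fun u hu => hconst u hu ▸ ht
  have hle : cp ≤ cn := hcpt.trans htcn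
  exact ⟨cp, cn, hcpt, htcn, hlen, fun u hu => hπ u (Set.Ioo_subset_Icc_self hu),
    fun _ => ⟨hπ cp ⟨le_rfl, hle⟩, hπ cn ⟨hle, le_rfl⟩⟩⟩

/-- Lemma "changepoints": if `b` is piecewise constant with transition points `τ` that are
at least `δ` apart (non-Berkeley for `δ`), and a propositional formula `π` holds at `t`,
then there are `c_p ≤ t ≤ c_n` with `c_n - c_p ≥ δ` such that `π` holds on `(c_p, c_n)`;
and if `c_n - c_p = δ` exactly then `π` also holds at `c_p` and `c_n`. -/
theorem changepoints (b : ℝ → Set P) (τ : Set ℝ) (δ : ℝ) (hδ : 0 < δ)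
    (hsep : ∀ x ∈ τ, ∀ y ∈ τ, x ≠ y → δ ≤ |x - y|)
    (hpc : ∀ x y : ℝ, x ≤ y → Set.Icc x y ∩ τ = ∅ → b x = b y)
    (hnb : NonBerkeley δ b)
    (π : PropForm P) (t : ℝ) (ht : π.eval (b t)) :
    ∃ cp cn : ℝ, cp ≤ t ∧ t ≤ cn ∧ δ ≤ cn - cp ∧
      (∀ t' ∈ Set.Ioo cp cn, π.eval (b t')) ∧
      (cn - cp = δ → π.eval (b cp) ∧ π.eval (b cn)) :=
  changepoints_general b δ hδ hnb π t ht
end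

section
/- Let δ > 0, z ∈ ℝ, and let b : ℝ → Set P be non-Berkeley for δ (piecewise constant, with each maximal constancy interval containing a closed subinterval of length δ). Let π₁, π₂ be propositional formulas and l ≤ u rationals with 0 ≤ l. If at the sampling instant t = z + kδ the dense-time formula U_{[l,u]}(π₁,π₂) holds (i.e., there is d ∈ [l,u] with π₂ true at t+d and π₁ true on [t, t+d)), then the discrete-time formula U_{[⌊l/δ⌋,⌈u/δ⌉]}(π₁,π₂) holds at k in the sampled behavior σ_{δ,z}[b] (i.e., there is an integer d' ∈ [⌊l/δ⌋,⌈u/δ⌉] with π₂ true at sample k+d' and π₁ true at all samples k+e' for integers 0 ≤ e' < d'). -/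
variable {P : Type*} {α : Type*}

/-!
Let `t = z + kδ` and let `d` witness the dense-time until. The maximal constancy interval of `b`
through `t + d` is order-connected and contains a closed interval of length `δ`, so it cannot
fit strictly between the samples `t + ⌊d/δ⌋δ ≤ t + d ≤ t + ⌈d/δ⌉δ`, which are at most `δ`
apart: one of them lies in it, and there `π₂` holds. Every earlier sample lies strictly before
`t + d`, where `π₁` holds, and `⌊l/δ⌋ ≤ ⌊d/δ⌋ ≤ ⌈d/δ⌉ ≤ ⌈u/δ⌉`.
-/

open Set

theorem Set.OrdConnected.mem_or_mem_of_Icc_subset {β : Type*} [AddCommGroup β] [LinearOrder β]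
    [IsOrderedAddMonoid β] {I : Set β} (hI : I.OrdConnected) {x s δ g₁ g₂ : β}
    (hx : x ∈ I) (hs : Icc s (s + δ) ⊆ I) (hg : x ∈ Icc g₁ g₂) (hlen : g₂ ≤ g₁ + δ) :
    g₁ ∈ I ∨ g₂ ∈ I := by
  have hδ : 0 ≤ δ := le_add_iff_nonneg_right g₁ |>.mp (hg.1.trans hg.2 |>.trans hlen)
  rcases le_or_gt s g₁ with hsg₁ | hg₁s
  · left
    rcases le_or_gt g₁ (s + δ) with hg₁ | hg₁
    · exact hs ⟨hsg₁, hg₁⟩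
    · exact hI.out (hs ⟨le_add_of_nonneg_right hδ, le_rfl⟩) hx ⟨hg₁.le, hg.1⟩
  · right
    rcases le_or_gt s g₂ with hsg₂ | hg₂s
    · exact hs ⟨hsg₂, hlen.trans (add_le_add_left hg₁s.le δ)⟩
    · exact hI.out hx (hs ⟨le_rfl, le_add_of_nonneg_right hδ⟩) ⟨hg.2, hg₂s.le⟩

theorem Set.OrdConnected.exists_sample_mem {I : Set ℝ} (hI : I.OrdConnected) {δ s t d : ℝ}
    (hδ : 0 < δ) (hs : Icc s (s + δ) ⊆ I) (hx : t + d ∈ I) :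
    ∃ j : ℤ, ⌊d / δ⌋ ≤ j ∧ j ≤ ⌈d / δ⌉ ∧ t + j * δ ∈ I := by
  have hfloor : (⌊d / δ⌋ : ℝ) * δ ≤ d := (le_div_iff₀ hδ).mp (Int.floor_le _)
  have hceil : d ≤ (⌈d / δ⌉ : ℝ) * δ := (div_le_iff₀ hδ).mp (Int.le_ceil _)
  have hgap : (⌈d / δ⌉ : ℝ) ≤ ⌊d / δ⌋ + 1 := by exact_mod_cast Int.ceil_le_floor_add_one _
  rcases hI.mem_or_mem_of_Icc_subset hx hs (g₁ := t + ⌊d / δ⌋ * δ) (g₂ := t + ⌈d / δ⌉ * δ)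
    ⟨by linarith, by linarith⟩ (by linarith [mul_le_mul_of_nonneg_right hgap hδ.le]) with h | h
  · exact ⟨_, le_rfl, Int.floor_le_ceil _, h⟩
  · exact ⟨_, Int.floor_le_ceil _, le_rfl, h⟩

theorem NonBerkeley.exists_sample_eq {δ : ℝ} {b : ℝ → α} (hb : NonBerkeley δ b) (hδ : 0 < δ)
    (t d : ℝ) : ∃ j : ℤ, ⌊d / δ⌋ ≤ j ∧ j ≤ ⌈d / δ⌉ ∧ b (t + j * δ) = b (t + d) := by
  obtain ⟨I, hI, hxI⟩ := hb.1 (t + d)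
  obtain ⟨s, hs⟩ := hb.2 I hI
  obtain ⟨⟨-, hIconn, hIconst⟩, -⟩ := hI
  obtain ⟨j, hj₁, hj₂, hjI⟩ := hIconn.exists_sample_mem hδ hs hxI
  exact ⟨j, hj₁, hj₂, hIconst _ hjI _ hxI⟩

theorem until_closed_under_sampling_general (δ z : ℝ) (hδ : 0 < δ) (b : ℝ → Set P)
    (hb : NonBerkeley δ b) (π₁ π₂ : PropForm P) (l u : ℚ)
    (k : ℤ)
    (h : ∃ d : ℝ, (l : ℝ) ≤ d ∧ d ≤ (u : ℝ) ∧ π₂.eval (b (z + (k : ℝ) * δ + d)) ∧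
      ∀ t' : ℝ, 0 ≤ t' → t' < d → π₁.eval (b (z + (k : ℝ) * δ + t'))) :
    ∃ d' : ℤ, ⌊(l : ℝ) / δ⌋ ≤ d' ∧ d' ≤ ⌈(u : ℝ) / δ⌉ ∧
      π₂.eval (b (z + ((k + d' : ℤ) : ℝ) * δ)) ∧
      ∀ e' : ℤ, 0 ≤ e' → e' < d' → π₁.eval (b (z + ((k + e' : ℤ) : ℝ) * δ)) := by
  obtain ⟨d, hld, hdu, hπ₂, hπ₁⟩ := h
  have sample_eq (i : ℤ) : z + ((k + i : ℤ) : ℝ) * δ = z + k * δ + i * δ := by push_cast; ring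
  obtain ⟨j, hfloor, hceil, hbj⟩ := hb.exists_sample_eq hδ (z + k * δ) d
  refine ⟨j, ?_, ?_, ?_, fun e he₀ hej => ?_⟩
  · exact (Int.floor_le_floor (div_le_div_of_nonneg_right hld hδ.le)).trans hfloor
  · exact hceil.trans (Int.ceil_le_ceil (div_le_div_of_nonneg_right hdu hδ.le))
  · rwa [sample_eq, hbj]
  · rw [sample_eq]
    exact hπ₁ _ (by positivity) ((lt_div_iff₀ hδ).mp (Int.lt_ceil.mp (hej.trans_le hceil)))

/-- Closure under sampling, `until` case: if the dense-time bounded until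
`U_{[l,u]}(π₁, π₂)` holds at the sampling instant `t = z + kδ` of a behavior non-Berkeley
for `δ`, then the discrete-time until `U_{[⌊l/δ⌋, ⌈u/δ⌉]}(π₁, π₂)` holds at `k` in the
sampled behavior. -/
theorem until_closed_under_sampling (δ z : ℝ) (hδ : 0 < δ) (b : ℝ → Set P)
    (hb : NonBerkeley δ b) (π₁ π₂ : PropForm P) (l u : ℚ) (hl : 0 ≤ l) (hlu : l ≤ u)
    (k : ℤ)
    (h : ∃ d : ℝ, (l : ℝ) ≤ d ∧ d ≤ (u : ℝ) ∧ π₂.eval (b (z + (k : ℝ) * δ + d)) ∧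
      ∀ t' : ℝ, 0 ≤ t' → t' < d → π₁.eval (b (z + (k : ℝ) * δ + t'))) :
    ∃ d' : ℤ, ⌊(l : ℝ) / δ⌋ ≤ d' ∧ d' ≤ ⌈(u : ℝ) / δ⌉ ∧
      π₂.eval (b (z + ((k + d' : ℤ) : ℝ) * δ)) ∧
      ∀ e' : ℤ, 0 ≤ e' → e' < d' → π₁.eval (b (z + ((k + e' : ℤ) : ℝ) * δ)) :=
  until_closed_under_sampling_general δ z hδ b hb π₁ π₂ l u k h
end

section
/- Let δ > 0, z ∈ ℝ, let d : ℤ → Set P be a discrete-time behavior, and let b : ℝ → Set P be non-Berkeley for δ with σ_{δ,z}[b] = d. Let π₁, π₂ be propositional formulas and l ≤ u integers with 0 ≤ l. If the discrete-time release R_{[l,u]}(π₁,π₂) holds at every integer k in d, then the dense-time release R_{[(l+1)δ,(u-1)δ]}(π₁,π₂) holds at every sampling instant t = z + kδ in b. In fact the stronger formula R_{[lδ,uδ]}(π₁,π₂) holds at every sampling instant. -/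
variable {P : Type*} {α : Type*}

/-! Fix a sampling instant `t` and let `x ∈ [lδ, uδ]` lie between consecutive samples
`t + jδ ≤ t + x < t + (j + 1)δ`. The discrete release at `j` (and, if `x` is not itself a
sample, at `j + 1`) either supplies a `π₁`-witness at a sample `t + eδ` with `e ≤ j`, which
precedes `t + x`, or `π₂` holds at both samples around `t + x`. In the latter case
non-Berkeleyness gives `π₂` at `t + x`: the maximal constancy interval through `t + x`
contains an interval of length `δ`, hence one of the two samples. -/

namespace NonBerkeley

variable {δ : ℝ} {b : ℝ → α}

lemma eq_left_or_eq_right (hb : NonBerkeley δ b) {t r : ℝ} (htr : t ≤ r) (hrt : r ≤ t + δ) :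
    b r = b t ∨ b r = b (t + δ) := by
  obtain ⟨I, hI, hrI⟩ := hb.1 r
  obtain ⟨a, ha⟩ := hb.2 I hI
  obtain ⟨⟨-, hconn, hconst⟩, -⟩ := hI
  have haI : a ∈ I := ha ⟨le_rfl, by linarith⟩
  have haδI : a + δ ∈ I := ha ⟨by linarith, le_rfl⟩
  rcases le_or_gt a t with hat | hta
  · exact .inl (hconst r hrI t (hconn.out haI hrI ⟨hat, htr⟩))
  · exact .inr (hconst r hrI (t + δ) (hconn.out hrI haδI ⟨hrt, by linarith⟩))

lemma apply_of_apply_of_apply_add (hb : NonBerkeley δ b) {p : α → Prop} {t r : ℝ}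
    (ht : p (b t)) (htδ : p (b (t + δ))) (htr : t ≤ r) (hrt : r ≤ t + δ) : p (b r) := by
  rcases hb.eq_left_or_eq_right htr hrt with h | h <;> rw [h] <;> assumption

end NonBerkeley

lemma exists_int_mul_le_lt_add_one_mul {δ : ℝ} (hδ : 0 < δ) (x : ℝ) :
    ∃ j : ℤ, (j : ℝ) * δ ≤ x ∧ x < ((j : ℝ) + 1) * δ :=
  ⟨⌊x / δ⌋, (le_div_iff₀ hδ).1 (Int.floor_le _), (div_lt_iff₀ hδ).1 (Int.lt_floor_add_one _)⟩

lemma dense_release_of_sampled_release {δ t : ℝ} (hδ : 0 < δ) {b : ℝ → α}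
    (hb : NonBerkeley δ b) {p q : α → Prop} {l u : ℤ}
    (h : ∀ j : ℤ, l ≤ j → j ≤ u →
      q (b (t + (j : ℝ) * δ)) ∨ ∃ e : ℤ, 0 ≤ e ∧ e < j ∧ p (b (t + (e : ℝ) * δ)))
    {x : ℝ} (hlx : (l : ℝ) * δ ≤ x) (hxu : x ≤ (u : ℝ) * δ) :
    q (b (t + x)) ∨ ∃ y : ℝ, 0 ≤ y ∧ y < x ∧ p (b (t + y)) := by
  obtain ⟨j, hjx, hxj⟩ := exists_int_mul_le_lt_add_one_mul hδ x
  have hlj : l ≤ j := by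
    have : (l : ℝ) < j + 1 := lt_of_mul_lt_mul_right (hlx.trans_lt hxj) hδ.le
    have : l < j + 1 := by exact_mod_cast this
    omega
  have hju : j ≤ u := by exact_mod_cast le_of_mul_le_mul_right (hjx.trans hxu) hδ
  rcases hjx.eq_or_lt with rfl | hjx_lt
  · rcases h j hlj hju with hq | ⟨e, he, hej, hp⟩
    · exact .inl hq
    · exact .inr ⟨e * δ, by positivity, mul_lt_mul_of_pos_right (by exact_mod_cast hej) hδ, hp⟩
  have witness {e : ℤ} (he : 0 ≤ e) (hej : e ≤ j) (hp : p (b (t + (e : ℝ) * δ))) :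
      ∃ y : ℝ, 0 ≤ y ∧ y < x ∧ p (b (t + y)) :=
    ⟨e * δ, by positivity,
      (mul_le_mul_of_nonneg_right (by exact_mod_cast hej) hδ.le).trans_lt hjx_lt, hp⟩
  have hju' : j + 1 ≤ u := by
    have : (j : ℝ) < u := lt_of_mul_lt_mul_right (hjx_lt.trans_le hxu) hδ.le
    exact_mod_cast this
  rcases h j hlj hju with hq | ⟨e, he, hej, hp⟩
  · rcases h (j + 1) (by omega) hju' with hq' | ⟨e, he, hej, hp⟩
    · have hsucc : t + (j : ℝ) * δ + δ = t + ((j + 1 : ℤ) : ℝ) * δ := by push_cast; ring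
      refine .inl (hb.apply_of_apply_of_apply_add (t := t + j * δ) hq ?_ (by linarith)
        (by linarith))
      rwa [hsucc]
    · exact .inr (witness he (by omega) hp)
  · exact .inr (witness he hej.le hp)

theorem release_closed_under_inverse_sampling_general (δ z : ℝ) (hδ : 0 < δ)
    (d : ℤ → Set P) (b : ℝ → Set P) (hb : NonBerkeley δ b)
    (hsamp : ∀ k : ℤ, d k = b (z + (k : ℝ) * δ))
    (π₁ π₂ : PropForm P) (l u : ℤ)
    (h : ∀ k j : ℤ, l ≤ j → j ≤ u →
      π₂.eval (d (k + j)) ∨ ∃ e : ℤ, 0 ≤ e ∧ e < j ∧ π₁.eval (d (k + e))) :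
    ∀ k : ℤ,
      (∀ x : ℝ, (l : ℝ) * δ ≤ x → x ≤ (u : ℝ) * δ →
        π₂.eval (b (z + (k : ℝ) * δ + x)) ∨
          ∃ y : ℝ, 0 ≤ y ∧ y < x ∧ π₁.eval (b (z + (k : ℝ) * δ + y))) ∧
      (∀ x : ℝ, ((l : ℝ) + 1) * δ ≤ x → x ≤ ((u : ℝ) - 1) * δ →
        π₂.eval (b (z + (k : ℝ) * δ + x)) ∨
          ∃ y : ℝ, 0 ≤ y ∧ y < x ∧ π₁.eval (b (z + (k : ℝ) * δ + y))) := by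
  intro k
  have hd : ∀ j : ℤ, d (k + j) = b (z + (k : ℝ) * δ + (j : ℝ) * δ) := fun j => by
    rw [hsamp]; push_cast; ring_nf
  have dense : ∀ x : ℝ, (l : ℝ) * δ ≤ x → x ≤ (u : ℝ) * δ →
      π₂.eval (b (z + (k : ℝ) * δ + x)) ∨
        ∃ y : ℝ, 0 ≤ y ∧ y < x ∧ π₁.eval (b (z + (k : ℝ) * δ + y)) :=
    fun x hlx hxu => dense_release_of_sampled_release hδ hb
      (fun j hlj hju => by simpa only [hd] using h k j hlj hju) hlx hxu
  exact ⟨dense, fun x hlx hxu => dense x (by linarith) (by linarith)⟩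

/-- Closure under inverse sampling, `release` case: if the discrete-time release
`R_{[l,u]}(π₁, π₂)` holds at every integer in `d = σ_{δ,z}[b]` and `b` is non-Berkeley
for `δ`, then the dense-time release `R_{[(l+1)δ,(u-1)δ]}(π₁, π₂)` — and in fact the
stronger `R_{[lδ,uδ]}(π₁, π₂)` — holds at every sampling instant `z + kδ`. -/
theorem release_closed_under_inverse_sampling (δ z : ℝ) (hδ : 0 < δ)
    (d : ℤ → Set P) (b : ℝ → Set P) (hb : NonBerkeley δ b)
    (hsamp : ∀ k : ℤ, d k = b (z + (k : ℝ) * δ))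
    (π₁ π₂ : PropForm P) (l u : ℤ) (hl : 0 ≤ l) (hlu : l ≤ u)
    (h : ∀ k j : ℤ, l ≤ j → j ≤ u →
      π₂.eval (d (k + j)) ∨ ∃ e : ℤ, 0 ≤ e ∧ e < j ∧ π₁.eval (d (k + e))) :
    ∀ k : ℤ,
      (∀ x : ℝ, (l : ℝ) * δ ≤ x → x ≤ (u : ℝ) * δ →
        π₂.eval (b (z + (k : ℝ) * δ + x)) ∨
          ∃ y : ℝ, 0 ≤ y ∧ y < x ∧ π₁.eval (b (z + (k : ℝ) * δ + y))) ∧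
      (∀ x : ℝ, ((l : ℝ) + 1) * δ ≤ x → x ≤ ((u : ℝ) - 1) * δ →
        π₂.eval (b (z + (k : ℝ) * δ + x)) ∨
          ∃ y : ℝ, 0 ≤ y ∧ y < x ∧ π₁.eval (b (z + (k : ℝ) * δ + y))) :=
  release_closed_under_inverse_sampling_general δ z hδ d b hb hsamp π₁ π₂ l u h
end

section
/- Let b : ℝ → Set P be a non-Berkeley behavior for δ and suppose proposition p ∈ P holds at two sampling instants t and t + δ (i.e., p ∈ b(t) and p ∈ b(t+δ)). Then p holds throughout the closed interval [t, t+δ]. -/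
variable {P : Type*} {α : Type*}

/-! The maximal constancy interval through `s` is order-connected and contains some `[u, u + δ]`;
comparing `u` with `t` shows it also contains `t` or `t + δ`, so `b s` equals `b t` or `b (t + δ)`. -/

theorem Set.OrdConnected.mem_or_add_mem {G : Type*} [AddCommGroup G] [LinearOrder G]
    [IsOrderedAddMonoid G] {I : Set G} (hI : I.OrdConnected) {s t u δ : G}
    (hu : u ∈ I) (huδ : u + δ ∈ I) (hs : s ∈ I) (hts : t ≤ s) (hst : s ≤ t + δ) :
    t ∈ I ∨ t + δ ∈ I := by
  rcases le_or_gt u t with hut | htu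
  · exact Or.inl (hI.out hu hs ⟨hut, hts⟩)
  · exact Or.inr (hI.out hs huδ ⟨hst, add_le_add_left htu.le δ⟩)

theorem NonBerkeley.apply_eq_or_apply_eq {δ : ℝ} {b : ℝ → α} (hb : NonBerkeley δ b) {s t : ℝ}
    (hs : s ∈ Set.Icc t (t + δ)) : b s = b t ∨ b s = b (t + δ) := by
  obtain ⟨I, hI, hsI⟩ := hb.1 s
  obtain ⟨u, hu⟩ := hb.2 I hI
  obtain ⟨⟨-, hconn, hconst⟩, -⟩ := hI
  have hδ : 0 ≤ δ := by linarith [hs.1, hs.2]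
  have huI : u ∈ I := hu ⟨le_rfl, by linarith⟩
  have huδI : u + δ ∈ I := hu ⟨by linarith, le_rfl⟩
  rcases hconn.mem_or_add_mem huI huδI hsI hs.1 hs.2 with ht | ht
  · exact Or.inl (hconst s hsI t ht)
  · exact Or.inr (hconst s hsI (t + δ) ht)

theorem holds_between_samples_general (δ : ℝ) (b : ℝ → Set P)
    (hb : NonBerkeley δ b) (p : P) (t : ℝ) (h1 : p ∈ b t) (h2 : p ∈ b (t + δ)) :
    ∀ s ∈ Set.Icc t (t + δ), p ∈ b s := by
  intro s hs
  rcases hb.apply_eq_or_apply_eq hs with h | h <;> rw [h] <;> assumption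

/-- If `b` is non-Berkeley for `δ` and proposition `p` holds at both `t` and `t + δ`,
then `p` holds throughout `[t, t + δ]`. -/
theorem holds_between_samples (δ : ℝ) (hδ : 0 < δ) (b : ℝ → Set P)
    (hb : NonBerkeley δ b) (p : P) (t : ℝ) (h1 : p ∈ b t) (h2 : p ∈ b (t + δ)) :
    ∀ s ∈ Set.Icc t (t + δ), p ∈ b s :=
  holds_between_samples_general δ b hb p t h1 h2
end

section
/- Define qualitative (LTL) formulas over alphabet P by the grammar φ ::= p | ¬φ | φ₁ ∧ φ₂ | U(φ₁, φ₂), interpreted over behaviors b : ℝ → Set P with non-strict unbounded until: U(φ₁,φ₂) holds at t iff ∃d ≥ 0 with φ₂ at t+d and φ₁ throughout [t, t+d). Then for any LTL formula φ and any behavior b non-Berkeley for δ, the set of discontinuity points of the truth-value function t ↦ [φ holds at t under b] is a subset of the set of discontinuity points of b; consequently the Boolean-valued function t ↦ [φ holds at t] is itself non-Berkeley for δ. -/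
variable {P : Type*} {α : Type*}

/-- Qualitative (LTL) formulas: atoms, negation, conjunction, and non-strict unbounded
until. -/
inductive LTL (P : Type*) where
  | atom : P → LTL P
  | not : LTL P → LTL P
  | and : LTL P → LTL P → LTL P
  | untl : LTL P → LTL P → LTL P

/-- Dense-time satisfaction of an LTL formula at instant `t` of behavior `b`. -/
def LTL.sat : LTL P → (ℝ → Set P) → ℝ → Prop
  | .atom p, b, t => p ∈ b t
  | .not φ, b, t => ¬ φ.sat b t
  | .and φ ψ, b, t => φ.sat b t ∧ ψ.sat b t
  | .untl φ ψ, b, t => ∃ d : ℝ, t ≤ d ∧ ψ.sat b d ∧ ∀ u : ℝ, t ≤ u → u < d → φ.sat b u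

/-! Every constancy interval of `b` is a constancy interval of the truth value of `φ`
(induction on `φ`). A function that is constant wherever `b` is has no more transition points
than `b`, and each of its maximal constancy intervals contains a maximal constancy interval of
`b`, hence a closed interval of length `δ`. -/

open Set

section ConstancyInterval

variable {β : Type*} {b : ℝ → α} {I J : Set ℝ}

lemma IsConstancyInterval.subset_preimage (hI : IsConstancyInterval b I) {t : ℝ} (ht : t ∈ I) :
    I ⊆ b ⁻¹' {b t} :=
  fun s hs => hI.2.2 s hs t ht

lemma IsConstancyInterval.union (hI : IsConstancyInterval b I) (hJ : IsConstancyInterval b J)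
    {t : ℝ} (htI : t ∈ I) (htJ : t ∈ J) : IsConstancyInterval b (I ∪ J) := by
  have hconn : IsPreconnected (I ∪ J) :=
    (isPreconnected_iff_ordConnected.2 hI.2.1).union t htI htJ
      (isPreconnected_iff_ordConnected.2 hJ.2.1)
  have hfiber : I ∪ J ⊆ b ⁻¹' {b t} :=
    union_subset (hI.subset_preimage htI) (hJ.subset_preimage htJ)
  exact ⟨⟨t, .inl htI⟩, isPreconnected_iff_ordConnected.1 hconn,
    fun s hs u hu => (hfiber hs).trans (hfiber hu).symm⟩

/-- The maximal constancy interval through `t` is the connected component of `t` in the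
level set of `f` through `t`. -/
lemma exists_isMaximalConstancyInterval (f : ℝ → α) (t : ℝ) :
    ∃ I, IsMaximalConstancyInterval f I ∧ t ∈ I := by
  set C := connectedComponentIn (f ⁻¹' {f t}) t
  have htC : t ∈ C := mem_connectedComponentIn rfl
  have hCfiber : C ⊆ f ⁻¹' {f t} := connectedComponentIn_subset _ _
  have hC : IsConstancyInterval f C :=
    ⟨⟨t, htC⟩, isPreconnected_iff_ordConnected.1 isPreconnected_connectedComponentIn,
      fun s hs u hu => (hCfiber hs).trans (hCfiber hu).symm⟩
  refine ⟨C, ⟨hC, fun J hJ hCJ => (Subset.antisymm hCJ ?_).symm⟩, htC⟩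
  exact (isPreconnected_iff_ordConnected.2 hJ.2.1).subset_connectedComponentIn (hCJ htC)
    (hJ.subset_preimage (hCJ htC))

lemma TransitionPoint.of_forall_isConstancyInterval {f : ℝ → β}
    (hfb : ∀ I, IsConstancyInterval b I → IsConstancyInterval f I) {x : ℝ}
    (hf : TransitionPoint f x) : TransitionPoint b x := by
  rintro ⟨ε, hε, hbx⟩
  have hball : ∀ y, |y - x| < ε ↔ y ∈ Ioo (x - ε) (x + ε) := fun y => by
    rw [← Real.dist_eq, ← Metric.mem_ball, Real.ball_eq_Ioo]
  have hxI : x ∈ Ioo (x - ε) (x + ε) := (hball x).1 (by simpa using hε)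
  have hbI : IsConstancyInterval b (Ioo (x - ε) (x + ε)) :=
    ⟨⟨x, hxI⟩, ordConnected_Ioo, fun s hs u hu =>
      (hbx s ((hball s).2 hs)).trans (hbx u ((hball u).2 hu)).symm⟩
  exact hf ⟨ε, hε, fun y hy => (hfb _ hbI).2.2 y ((hball y).1 hy) x hxI⟩

lemma NonBerkeley.of_forall_isConstancyInterval {f : ℝ → β}
    (hfb : ∀ I, IsConstancyInterval b I → IsConstancyInterval f I) {δ : ℝ}
    (hb : NonBerkeley δ b) : NonBerkeley δ f := by
  refine ⟨exists_isMaximalConstancyInterval f, fun J ⟨hJ, hJmax⟩ => ?_⟩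
  obtain ⟨t, htJ⟩ := hJ.1
  obtain ⟨I, hI, htI⟩ := hb.1 t
  have hIJ : I ⊆ J := by
    rw [← hJmax _ ((hfb I hI.1).union hJ htI htJ) subset_union_right]
    exact subset_union_left
  obtain ⟨s, hs⟩ := hb.2 I hI
  exact ⟨s, hs.trans hIJ⟩

end ConstancyInterval

/-- In the until case, a witness `d` of `φ U ψ` either lies in `I`, or lies beyond all of `I`,
and then the same witness serves every point of `I`. -/
lemma LTL.isConstancyInterval_sat {b : ℝ → Set P} {I : Set ℝ} (hI : IsConstancyInterval b I)
    (φ : LTL P) : IsConstancyInterval (φ.sat b) I := by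
  induction φ with
  | atom p => exact ⟨hI.1, hI.2.1, fun s hs u hu => congrArg (p ∈ ·) (hI.2.2 s hs u hu)⟩
  | not φ ih => exact ⟨hI.1, hI.2.1, fun s hs u hu => congrArg Not (ih.2.2 s hs u hu)⟩
  | and φ ψ ihφ ihψ =>
    exact ⟨hI.1, hI.2.1, fun s hs u hu => congrArg₂ And (ihφ.2.2 s hs u hu) (ihψ.2.2 s hs u hu)⟩
  | untl φ ψ ihφ ihψ =>
    suffices h : ∀ s ∈ I, ∀ u ∈ I, (φ.untl ψ).sat b s → (φ.untl ψ).sat b u from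
      ⟨hI.1, hI.2.1, fun s hs u hu => propext ⟨h s hs u hu, h u hu s hs⟩⟩
    rintro s hs u hu ⟨d, hsd, hψd, hφ⟩
    by_cases hdI : d ∈ I
    · exact ⟨u, le_rfl, ihψ.2.2 d hdI u hu ▸ hψd, fun v huv hvu => absurd hvu huv.not_gt⟩
    have hI_lt : ∀ v ∈ I, v < d := fun v hv =>
      lt_of_not_ge fun hdv => hdI (hI.2.1.out hs hv ⟨hsd, hdv⟩)
    have hφs : φ.sat b s := hφ s le_rfl (hI_lt s hs)
    refine ⟨d, (hI_lt u hu).le, hψd, fun v huv hvd => ?_⟩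
    by_cases hvI : v ∈ I
    · exact ihφ.2.2 s hs v hvI ▸ hφs
    · exact hφ v (le_of_not_gt fun hvs => hvI (hI.2.1.out hu hs ⟨huv, hvs.le⟩)) hvd

theorem ltl_shiftable_general (δ : ℝ) (b : ℝ → Set P)
    (hb : NonBerkeley δ b) (φ : LTL P) :
    (∀ x : ℝ, TransitionPoint (fun t => φ.sat b t) x → TransitionPoint b x) ∧
    NonBerkeley δ (fun t => φ.sat b t) :=
  have hsat := fun I (hI : IsConstancyInterval b I) => φ.isConstancyInterval_sat hI
  ⟨fun _ => TransitionPoint.of_forall_isConstancyInterval hsat,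
    NonBerkeley.of_forall_isConstancyInterval hsat hb⟩

/-- LTL formulas are shiftable: for `b` non-Berkeley for `δ`, the discontinuity points of
the truth-value function of any LTL formula are among the discontinuity points of `b`,
and hence the truth-value function is itself non-Berkeley for `δ`. -/
theorem ltl_shiftable (δ : ℝ) (hδ : 0 < δ) (b : ℝ → Set P)
    (hb : NonBerkeley δ b) (φ : LTL P) :
    (∀ x : ℝ, TransitionPoint (fun t => φ.sat b t) x → TransitionPoint b x) ∧
    NonBerkeley δ (fun t => φ.sat b t) :=
  ltl_shiftable_general δ b hb φ
end

section
/- Let δ > 0, let l ≤ u be integers with 0 ≤ l, and consider the matching until over discrete time: U^m_{[l,u]}(π₁,π₂) at k iff ∃d ∈ [l,u] with both π₁ and π₂ at k+d and π₁ at all k+e, e ∈ [0,d). Suppose d : ℤ → Set P satisfies U^m_{[l,u]}(π₁,π₂) at k and b : ℝ → Set P is non-Berkeley for δ with σ_{δ,z}[b] = d. Then the dense-time matching until U^m_{[lδ,uδ]}(π₁,π₂) holds at t = z + kδ in b: ∃d' ∈ [lδ, uδ] with both π₁ and π₂ at t+d' and π₁ throughout [t, t+d'). -/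
variable {P : Type*} {α : Type*}

/-!
Fix an instant `t + y` with `0 ≤ y < jδ`. It lies in a maximal constancy interval `I` of `b`,
and since `b` is non-Berkeley, `I` contains a whole closed interval of length `δ`, hence a
sampling instant `z + mδ`. Clamping `m` into `[k, k + j]` gives a sampling instant between
`t + y` and `z + mδ`, so still in `I`; there `b` agrees with `b (t + y)`, and the discrete
hypothesis says that `π₁` holds at every sample of `[k, k + j]`.
-/

open Set

lemma exists_mem_Icc_map_mem_uIcc {α β : Type*} [LinearOrder α] [LinearOrder β] {f : α → β}
    (hf : Monotone f) {m₁ m₂ : α} (hm : m₁ ≤ m₂) {x : β} (h₁ : f m₁ ≤ x) (h₂ : x ≤ f m₂)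
    (m : α) : ∃ n ∈ Icc m₁ m₂, f n ∈ uIcc x (f m) := by
  rcases lt_or_ge m m₁ with hm₁ | hm₁
  · exact ⟨m₁, ⟨le_rfl, hm⟩, mem_uIcc.2 (Or.inr ⟨hf hm₁.le, h₁⟩)⟩
  rcases lt_or_ge m₂ m with hm₂ | hm₂
  · exact ⟨m₂, ⟨hm, le_rfl⟩, mem_uIcc.2 (Or.inl ⟨h₂, hf hm₂.le⟩)⟩
  · exact ⟨m, ⟨hm₁, hm₂⟩, right_mem_uIcc⟩

section NonBerkeley

variable {δ : ℝ} {b : ℝ → α}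

lemma NonBerkeley.exists_sample_mem (hδ : 0 < δ) (hb : NonBerkeley δ b) {I : Set ℝ}
    (hI : IsMaximalConstancyInterval b I) (z : ℝ) : ∃ m : ℤ, z + m * δ ∈ I := by
  obtain ⟨a, ha⟩ := hb.2 I hI
  obtain ⟨m, hm, -⟩ := existsUnique_add_zsmul_mem_Ico hδ z a
  exact ⟨m, ha (Ico_subset_Icc_self (by simpa only [zsmul_eq_mul] using hm))⟩

lemma NonBerkeley.exists_sample_eq_s18 (hδ : 0 < δ) (hb : NonBerkeley δ b) (z : ℝ) {x : ℝ}
    {m₁ m₂ : ℤ} (hm : m₁ ≤ m₂) (h₁ : z + m₁ * δ ≤ x) (h₂ : x ≤ z + m₂ * δ) :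
    ∃ n ∈ Icc m₁ m₂, b x = b (z + n * δ) := by
  obtain ⟨I, hI, hxI⟩ := hb.1 x
  obtain ⟨m, hmI⟩ := hb.exists_sample_mem hδ hI z
  have hmono : Monotone fun n : ℤ ↦ z + n * δ := fun _ _ h ↦ by dsimp only; gcongr
  obtain ⟨n, hn, hnI⟩ := exists_mem_Icc_map_mem_uIcc hmono hm h₁ h₂ m
  obtain ⟨⟨-, hconn, hconst⟩, -⟩ := hI
  exact ⟨n, hn, hconst _ hxI _ (hconn.uIcc_subset hxI hmI hnI)⟩

end NonBerkeley

theorem matching_until_inverse_sampling_general (δ z : ℝ) (hδ : 0 < δ)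
    (l u : ℤ)
    (d : ℤ → Set P) (b : ℝ → Set P) (hb : NonBerkeley δ b)
    (hsamp : ∀ k : ℤ, d k = b (z + (k : ℝ) * δ))
    (π₁ π₂ : PropForm P) (k : ℤ)
    (h : ∃ j : ℤ, l ≤ j ∧ j ≤ u ∧ π₁.eval (d (k + j)) ∧ π₂.eval (d (k + j)) ∧
      ∀ e : ℤ, 0 ≤ e → e < j → π₁.eval (d (k + e))) :
    ∃ d' : ℝ, (l : ℝ) * δ ≤ d' ∧ d' ≤ (u : ℝ) * δ ∧
      π₁.eval (b (z + (k : ℝ) * δ + d')) ∧ π₂.eval (b (z + (k : ℝ) * δ + d')) ∧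
      ∀ y : ℝ, 0 ≤ y → y < d' → π₁.eval (b (z + (k : ℝ) * δ + y)) := by
  obtain ⟨j, hlj, hju, h₁, h₂, hall⟩ := h
  have hend : z + k * δ + j * δ = z + ((k + j : ℤ) : ℝ) * δ := by push_cast; ring
  have hπ₁ : ∀ n ∈ Icc k (k + j), π₁.eval (b (z + n * δ)) := by
    rintro n ⟨hkn, hnj⟩
    rw [← hsamp]
    rcases hnj.lt_or_eq with hlt | rfl
    · simpa only [add_sub_cancel] using hall (n - k) (by omega) (by omega)
    · exact h₁
  refine ⟨j * δ, by gcongr, by gcongr,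
    by rw [hend, ← hsamp]; exact h₁, by rw [hend, ← hsamp]; exact h₂, fun y hy₀ hyj ↦ ?_⟩
  have hj : (0 : ℝ) < j := (pos_iff_pos_of_mul_pos (hy₀.trans_lt hyj)).2 hδ
  obtain ⟨n, hn, hbn⟩ := hb.exists_sample_eq_s18 hδ z (x := z + k * δ + y)
    (by linarith [Int.cast_pos.1 hj] : k ≤ k + j) (by linarith)
    (by rw [← hend]; linarith)
  exact hbn ▸ hπ₁ n hn

/-- Closure under inverse sampling for the matching until (part (1)): if the discrete
matching until `U^m_{[l,u]}(π₁,π₂)` holds at `k` in `d = σ_{δ,z}[b]` and `b` is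
non-Berkeley for `δ`, then the dense-time matching until `U^m_{[lδ,uδ]}(π₁,π₂)` holds
at `t = z + kδ` in `b`. -/
theorem matching_until_inverse_sampling (δ z : ℝ) (hδ : 0 < δ)
    (l u : ℤ) (hl : 0 ≤ l) (hlu : l ≤ u)
    (d : ℤ → Set P) (b : ℝ → Set P) (hb : NonBerkeley δ b)
    (hsamp : ∀ k : ℤ, d k = b (z + (k : ℝ) * δ))
    (π₁ π₂ : PropForm P) (k : ℤ)
    (h : ∃ j : ℤ, l ≤ j ∧ j ≤ u ∧ π₁.eval (d (k + j)) ∧ π₂.eval (d (k + j)) ∧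
      ∀ e : ℤ, 0 ≤ e → e < j → π₁.eval (d (k + e))) :
    ∃ d' : ℝ, (l : ℝ) * δ ≤ d' ∧ d' ≤ (u : ℝ) * δ ∧
      π₁.eval (b (z + (k : ℝ) * δ + d')) ∧ π₂.eval (b (z + (k : ℝ) * δ + d')) ∧
      ∀ y : ℝ, 0 ≤ y → y < d' → π₁.eval (b (z + (k : ℝ) * δ + y)) :=
  matching_until_inverse_sampling_general δ z hδ l u d b hb hsamp π₁ π₂ k h
end
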